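/- arXiv:2006.00564 — 5 statements merged into one kernel-verified Lean document; each statement's English description precedes it below -/
import Mathlib

section
/- Let α, β ∈ ℝ and let φ₁, φ₂ : ℝ² → ℝ be continuously differentiable. Define the skew-symmetric matrix-valued map π : ℝ³ → Matrix(3,3,ℝ) on coordinates (S,I,R) by π_{SI} = 0, π_{SR} = −β·S·I + φ₁(S,I), π_{IR} = −α·I + β·S·I + φ₂(S,I) (and skew-symmetry determining the remaining entries, zero on the diagonal). Then π satisfies the Jacobi identity: for all x ∈ ℝ³ and all indices i,j,k, ∑_l (π_{l i}(x)·∂_l π_{j k}(x) + π_{l j}(x)·∂_l π_{k i}(x) + π_{l k}(x)·∂_l π_{i j}(x)) = 0. -/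
/-- A pointwise skew-symmetric matrix-valued map `P : ℝⁿ → Matrix(n,n,ℝ)` satisfies the
Jacobi identity if for all `x` and indices `i j k`,
`∑ l, (P_{l i}(x)·∂_l P_{j k}(x) + P_{l j}(x)·∂_l P_{k i}(x) + P_{l k}(x)·∂_l P_{i j}(x)) = 0`. -/
def JacobiIdentity {n : Type*} [Fintype n] [DecidableEq n]
    (P : (n → ℝ) → Matrix n n ℝ) : Prop :=
  ∀ x : n → ℝ, ∀ i j k : n,
    ∑ l : n,
      (P x l i * fderiv ℝ (fun y => P y j k) x (Pi.single l 1) +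
        P x l j * fderiv ℝ (fun y => P y k i) x (Pi.single l 1) +
        P x l k * fderiv ℝ (fun y => P y i j) x (Pi.single l 1)) = 0

/-- The Poisson structure of the generalized SIR model, on coordinates `(S,I,R) = (x 0, x 1, x 2)`:
`π_{SI} = 0`, `π_{SR} = −β·S·I + φ₁(S,I)`, `π_{IR} = −α·I + β·S·I + φ₂(S,I)`,
skew-symmetry determining the remaining entries. -/
noncomputable def sirPoisson (α β : ℝ) (φ₁ φ₂ : ℝ × ℝ → ℝ) (x : Fin 3 → ℝ) :
    Matrix (Fin 3) (Fin 3) ℝ :=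
  Matrix.of
    ![![0, 0, -β * x 0 * x 1 + φ₁ (x 0, x 1)],
      ![0, 0, -α * x 1 + β * x 0 * x 1 + φ₂ (x 0, x 1)],
      ![-(-β * x 0 * x 1 + φ₁ (x 0, x 1)),
        -(-α * x 1 + β * x 0 * x 1 + φ₂ (x 0, x 1)), 0]]

/-!
With `∂_R` the last coordinate field, `π = V ∧ ∂_R` for `V = π_{SR} ∂_S + π_{IR} ∂_I`, and such a
bivector is Poisson as soon as `[V, ∂_R] = 0`, i.e. `V` does not depend on `R`. In coordinates,
every summand of the Jacobiator vanishes on its own: for `l = R` the derivatives vanish, for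
`l ≠ R` the coefficient `π_{l i}` vanishes unless `i = R`, and what remains either differentiates
an entry that is identically zero or cancels by skew-symmetry.
-/

theorem fderiv_apply_eq_zero_of_forall_add_smul_eq {E F : Type*} [NormedAddCommGroup E]
    [NormedSpace ℝ E] [NormedAddCommGroup F] [NormedSpace ℝ F] {f : E → F} {v : E}
    (hf : ∀ y (t : ℝ), f (y + t • v) = f y) (x : E) : fderiv ℝ f x v = 0 := by
  by_cases hdiff : DifferentiableAt ℝ f x
  · rw [← hdiff.lineDeriv_eq_fderiv, lineDeriv]
    simp only [hf, deriv_const]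
  · rw [fderiv_zero_of_not_differentiableAt hdiff, zero_apply]

theorem jacobiIdentity_of_eq_zero_off_rowCol {n : Type*} [Fintype n] [DecidableEq n]
    {P : (n → ℝ) → Matrix n n ℝ} (r : n) (hskew : ∀ x i j, P x j i = -P x i j)
    (hsupp : ∀ x i j, i ≠ r → j ≠ r → P x i j = 0)
    (hinv : ∀ x i j, fderiv ℝ (fun y => P y i j) x (Pi.single r 1) = 0) :
    JacobiIdentity P := by
  intro x i j k
  have hcol : ∀ a, a ≠ r → fderiv ℝ (fun y => P y a r) x = -fderiv ℝ (fun y => P y r a) x :=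
    fun a _ => by simp only [funext fun y => hskew y r a, fderiv_fun_neg]
  have hdiag : fderiv ℝ (fun y => P y r r) x = 0 := by
    simp only [funext fun y => (by linarith [hskew y r r] : P y r r = 0), fderiv_fun_const,
      Pi.zero_apply]
  have hoff : ∀ a b, a ≠ r → b ≠ r → fderiv ℝ (fun y => P y a b) x = 0 := fun a b ha hb => by
    simp only [hsupp _ a b ha hb, fderiv_fun_const, Pi.zero_apply]
  refine Finset.sum_eq_zero fun l _ => ?_
  by_cases hl : l = r
  · simp only [hl, hinv, mul_zero, add_zero]
  have hrow : ∀ m, m ≠ r → P x l m = 0 := fun m => hsupp x l m hl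
  by_cases hi : i = r <;> by_cases hj : j = r <;> by_cases hk : k = r <;>
    simp [hi, hj, hk, hcol, hdiag, hoff, hrow]

section sirPoisson

variable (α β : ℝ) (φ₁ φ₂ : ℝ × ℝ → ℝ)

theorem sirPoisson_apply_swap (x : Fin 3 → ℝ) (i j : Fin 3) :
    sirPoisson α β φ₁ φ₂ x j i = -sirPoisson α β φ₁ φ₂ x i j := by
  fin_cases i <;> fin_cases j <;> simp [sirPoisson]

theorem sirPoisson_apply_eq_zero (x : Fin 3 → ℝ) {i j : Fin 3} (hi : i ≠ 2) (hj : j ≠ 2) :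
    sirPoisson α β φ₁ φ₂ x i j = 0 := by
  fin_cases i <;> fin_cases j <;> simp_all [sirPoisson]

theorem sirPoisson_add_smul_single_two (x : Fin 3 → ℝ) (t : ℝ) :
    sirPoisson α β φ₁ φ₂ (x + t • Pi.single 2 1) = sirPoisson α β φ₁ φ₂ x := by
  simp [sirPoisson]

end sirPoisson

theorem generalizedSIR_poisson_jacobi_general (α β : ℝ) (φ₁ φ₂ : ℝ × ℝ → ℝ) :
    JacobiIdentity (sirPoisson α β φ₁ φ₂) :=
  jacobiIdentity_of_eq_zero_off_rowCol 2 (sirPoisson_apply_swap α β φ₁ φ₂)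
    (fun x _ _ => sirPoisson_apply_eq_zero α β φ₁ φ₂ x)
    fun x _ _ => fderiv_apply_eq_zero_of_forall_add_smul_eq
      (fun _ _ => by rw [sirPoisson_add_smul_single_two]) x

theorem generalizedSIR_poisson_jacobi (α β : ℝ) (φ₁ φ₂ : ℝ × ℝ → ℝ)
    (hφ₁ : ContDiff ℝ 1 φ₁) (hφ₂ : ContDiff ℝ 1 φ₂) :
    JacobiIdentity (sirPoisson α β φ₁ φ₂) :=
  generalizedSIR_poisson_jacobi_general α β φ₁ φ₂
end

section
/- Let α, β ∈ ℝ and let φ₁, φ₂ : ℝ² → ℝ. Let π : ℝ³ → Matrix(3,3,ℝ) be the skew-symmetric matrix-valued map on coordinates (S,I,R) with π_{SI} = 0, π_{SR} = −β·S·I + φ₁(S,I), π_{IR} = −α·I + β·S·I + φ₂(S,I), and let H(S,I,R) = S + I + R. Then for every (S,I,R) ∈ ℝ³, the vector π(S,I,R)·∇H(S,I,R) equals the right-hand side of the generalized SIR system, namely (−β·S·I + φ₁(S,I), β·S·I − α·I + φ₂(S,I), α·I − φ₁(S,I) − φ₂(S,I)). In particular every solution of Hamilton's equations ẋ = π(x)·∇H(x)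 solves the generalized SIR system. -/
/-- The Hamiltonian vector field `π(x)·∇H(x)` of a matrix-valued map `P` and Hamiltonian `H`. -/
noncomputable def hamVF {n : Type*} [Fintype n] [DecidableEq n]
    (P : (n → ℝ) → Matrix n n ℝ) (H : (n → ℝ) → ℝ) (x : n → ℝ) : n → ℝ :=
  (P x).mulVec fun j => fderiv ℝ H x (Pi.single j 1)

/-- The total population Hamiltonian `H(S,I,R) = S + I + R`. -/
def totalPop3 : (Fin 3 → ℝ) → ℝ := fun x => x 0 + x 1 + x 2

/-- The right-hand side of the generalized SIR system. -/
noncomputable def sirField (α β : ℝ) (φ₁ φ₂ : ℝ × ℝ → ℝ) (x : Fin 3 → ℝ) : Fin 3 → ℝ :=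
  ![-β * x 0 * x 1 + φ₁ (x 0, x 1),
    β * x 0 * x 1 - α * x 1 + φ₂ (x 0, x 1),
    α * x 1 - φ₁ (x 0, x 1) - φ₂ (x 0, x 1)]

open Matrix

theorem fderiv_sum_apply_single {n : Type*} [Fintype n] [DecidableEq n] (x : n → ℝ) (j : n) :
    fderiv ℝ (fun y : n → ℝ => ∑ i, y i) x (Pi.single j 1) = 1 := by
  have h : HasFDerivAt (fun y : n → ℝ => ∑ i, y i)
      (∑ i, ContinuousLinearMap.proj (R := ℝ) (φ := fun _ : n => ℝ) i) x :=
    HasFDerivAt.fun_sum fun i _ => hasFDerivAt_apply i x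
  rw [h.fderiv]
  simp

theorem hamVF_sum_eq_mulVec_one {n : Type*} [Fintype n] [DecidableEq n]
    (P : (n → ℝ) → Matrix n n ℝ) (x : n → ℝ) :
    hamVF P (fun y => ∑ i, y i) x = P x *ᵥ 1 := by
  simp only [hamVF, fderiv_sum_apply_single]
  rfl

theorem totalPop3_eq_sum : totalPop3 = fun x => ∑ i, x i := by
  ext x
  simp [totalPop3, Fin.sum_univ_three]

theorem sirPoisson_mulVec_one (α β : ℝ) (φ₁ φ₂ : ℝ × ℝ → ℝ) (x : Fin 3 → ℝ) :
    sirPoisson α β φ₁ φ₂ x *ᵥ 1 = sirField α β φ₁ φ₂ x := by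
  ext i
  fin_cases i <;>
    simp only [sirPoisson, sirField, mulVec, dotProduct, Fin.sum_univ_three, of_apply, cons_val',
      cons_val_fin_one, cons_val_zero, cons_val_one, cons_val, Pi.one_apply, mul_one, Fin.zero_eta,
      Fin.mk_one, Fin.reduceFinMk] <;> ring

theorem hamVF_sirPoisson_totalPop3 (α β : ℝ) (φ₁ φ₂ : ℝ × ℝ → ℝ) (x : Fin 3 → ℝ) :
    hamVF (sirPoisson α β φ₁ φ₂) totalPop3 x = sirField α β φ₁ φ₂ x := by
  rw [totalPop3_eq_sum, hamVF_sum_eq_mulVec_one, sirPoisson_mulVec_one]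

theorem generalizedSIR_hamiltonian (α β : ℝ) (φ₁ φ₂ : ℝ × ℝ → ℝ) :
    (∀ x : Fin 3 → ℝ,
      hamVF (sirPoisson α β φ₁ φ₂) totalPop3 x = sirField α β φ₁ φ₂ x) ∧
    (∀ γ : ℝ → Fin 3 → ℝ, ∀ t : ℝ,
      HasDerivAt γ (hamVF (sirPoisson α β φ₁ φ₂) totalPop3 (γ t)) t →
      HasDerivAt γ (sirField α β φ₁ φ₂ (γ t)) t) := by
  refine ⟨hamVF_sirPoisson_totalPop3 α β φ₁ φ₂, fun γ t hγ => ?_⟩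
  rwa [hamVF_sirPoisson_totalPop3] at hγ
end

section
/- Let α, β, ε ∈ ℝ and let φ₁, φ₂, φ₃ : ℝ³ → ℝ be continuously differentiable. Define the skew-symmetric matrix-valued map π : ℝ⁴ → Matrix(4,4,ℝ) on coordinates (S,E,I,R) by π_{SR} = −β·S·I + φ₁(S,E,I), π_{ER} = β·S·I − ε·E + φ₂(S,E,I), π_{IR} = −α·I + ε·E + φ₃(S,E,I), π_{SI} = π_{SE} = π_{EI} = 0 (skew-symmetry determining the remaining entries). Then π satisfies the Jacobi identity: for all x ∈ ℝ⁴ and all indices i,j,k, ∑_l (π_{l i}(x)·∂_l π_{j k}(x) + π_{l j}(x)·∂_l π_{k i}(x) + π_{l k}(x)·∂_l π_{i j}(x)) = 0. -/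
/-- The Poisson structure of the generalized SEIR model on coordinates
`(S,E,I,R) = (x 0, x 1, x 2, x 3)`: `π_{SR} = −β·S·I + φ₁(S,E,I)`,
`π_{ER} = β·S·I − ε·E + φ₂(S,E,I)`, `π_{IR} = −α·I + ε·E + φ₃(S,E,I)`,
`π_{SE} = π_{SI} = π_{EI} = 0`, skew-symmetry determining the remaining entries. -/
noncomputable def seirPoisson (α β ε : ℝ) (φ₁ φ₂ φ₃ : ℝ × ℝ × ℝ → ℝ) (x : Fin 4 → ℝ) :
    Matrix (Fin 4) (Fin 4) ℝ :=
  Matrix.of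
    ![![0, 0, 0, -β * x 0 * x 2 + φ₁ (x 0, x 1, x 2)],
      ![0, 0, 0, β * x 0 * x 2 - ε * x 1 + φ₂ (x 0, x 1, x 2)],
      ![0, 0, 0, -α * x 2 + ε * x 1 + φ₃ (x 0, x 1, x 2)],
      ![-(-β * x 0 * x 2 + φ₁ (x 0, x 1, x 2)),
        -(β * x 0 * x 2 - ε * x 1 + φ₂ (x 0, x 1, x 2)),
        -(-α * x 2 + ε * x 1 + φ₃ (x 0, x 1, x 2)), 0]]

/-!
The SEIR matrix is the bivector `v ∧ ∂_R` with `v = (π_SR, π_ER, π_IR, 0)`, and `v` does not depend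
on `R`; a wedge of two commuting vector fields is Poisson. In coordinates: in
`∑ l, π_{l i} ∂_l π_{j k}` the terms with `l = R` vanish because `∂_R` kills every entry, and the
remaining terms are `[i = R] (v·∂) π_{j k}`, whose cyclic sum cancels identically.
-/

open Finset

lemma fderiv_apply_eq_zero_of_forall_add_smul {𝕜 E F : Type*} [NontriviallyNormedField 𝕜]
    [NormedAddCommGroup E] [NormedSpace 𝕜 E] [NormedAddCommGroup F] [NormedSpace 𝕜 F]
    {f : E → F} {x v : E} (h : ∀ t : 𝕜, f (x + t • v) = f x) : fderiv 𝕜 f x v = 0 := by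
  by_cases hf : DifferentiableAt 𝕜 f x
  · rw [← hf.lineDeriv_eq_fderiv, lineDeriv, funext h, deriv_const]
  · simp [fderiv_zero_of_not_differentiableAt hf]

/-- The bivector `v ∧ ∂_r`. -/
def wedgeSingle {n : Type*} [DecidableEq n] (r : n) (v : (n → ℝ) → n → ℝ) (x : n → ℝ) :
    Matrix n n ℝ :=
  Matrix.of fun i j => (if j = r then v x i else 0) - (if i = r then v x j else 0)

namespace wedgeSingle

variable {n : Type*} [Fintype n] [DecidableEq n] {r : n} {v : (n → ℝ) → n → ℝ}

lemma fderiv_entry (x : n → ℝ) (j k : n) :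
    fderiv ℝ (fun y => wedgeSingle r v y j k) x =
      (if k = r then fderiv ℝ (fun y => v y j) x else 0) -
        (if j = r then fderiv ℝ (fun y => v y k) x else 0) := by
  by_cases hk : k = r <;> by_cases hj : j = r
  · subst hj hk; simp [wedgeSingle]
  all_goals simp [wedgeSingle, hj, hk, fderiv_fun_neg]

lemma sum_entry_mul (x : n → ℝ) (i : n) {g : n → ℝ} (hg : g r = 0) :
    ∑ l, wedgeSingle r v x l i * g l = if i = r then ∑ l, v x l * g l else 0 := by
  split_ifs with hi <;> simp [wedgeSingle, hi, sub_mul, ite_mul, hg]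

theorem jacobiIdentity (hv : ∀ x (t : ℝ) i, v (x + t • Pi.single r 1) i = v x i) :
    JacobiIdentity (wedgeSingle r v) := by
  intro x i j k
  have hr : ∀ a b, fderiv ℝ (fun y => wedgeSingle r v y a b) x (Pi.single r 1) = 0 :=
    fun a b => fderiv_apply_eq_zero_of_forall_add_smul fun t => by simp [wedgeSingle, hv]
  set D : n → ℝ := fun a => ∑ l, v x l * fderiv ℝ (fun y => v y a) x (Pi.single l 1)
  have hflow : ∀ a b, ∑ l, v x l * fderiv ℝ (fun y => wedgeSingle r v y a b) x (Pi.single l 1) =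
      (if b = r then D a else 0) - (if a = r then D b else 0) := by
    intro a b
    split_ifs <;> simp [fderiv_entry, *, D]
  rw [sum_add_distrib, sum_add_distrib, sum_entry_mul x i (hr j k), sum_entry_mul x j (hr k i),
    sum_entry_mul x k (hr i j), hflow, hflow, hflow]
  by_cases hi : i = r <;> by_cases hj : j = r <;> by_cases hk : k = r <;> simp [hi, hj, hk]

end wedgeSingle

theorem generalizedSEIR_poisson_jacobi_general (α β ε : ℝ) (φ₁ φ₂ φ₃ : ℝ × ℝ × ℝ → ℝ) :
    JacobiIdentity (seirPoisson α β ε φ₁ φ₂ φ₃) := by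
  set v : (Fin 4 → ℝ) → Fin 4 → ℝ := fun x =>
    ![-β * x 0 * x 2 + φ₁ (x 0, x 1, x 2), β * x 0 * x 2 - ε * x 1 + φ₂ (x 0, x 1, x 2),
      -α * x 2 + ε * x 1 + φ₃ (x 0, x 1, x 2), 0]
  have hπ : seirPoisson α β ε φ₁ φ₂ φ₃ = wedgeSingle 3 v := by
    ext x i j
    fin_cases i <;> fin_cases j <;> simp [seirPoisson, wedgeSingle, v]
  rw [hπ]
  refine wedgeSingle.jacobiIdentity fun x t i => ?_
  fin_cases i <;> simp [v]

theorem generalizedSEIR_poisson_jacobi (α β ε : ℝ) (φ₁ φ₂ φ₃ : ℝ × ℝ × ℝ → ℝ)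
    (hφ₁ : ContDiff ℝ 1 φ₁) (hφ₂ : ContDiff ℝ 1 φ₂) (hφ₃ : ContDiff ℝ 1 φ₃) :
    JacobiIdentity (seirPoisson α β ε φ₁ φ₂ φ₃) :=
  generalizedSEIR_poisson_jacobi_general α β ε φ₁ φ₂ φ₃
end

section
/- Let α, β, ε ∈ ℝ and φ₁, φ₂, φ₃ : ℝ³ → ℝ. With π : ℝ⁴ → Matrix(4,4,ℝ) the skew-symmetric map on coordinates (S,E,I,R) given by π_{SR} = −β·S·I + φ₁(S,E,I), π_{ER} = β·S·I − ε·E + φ₂(S,E,I), π_{IR} = −α·I + ε·E + φ₃(S,E,I), π_{SI} = π_{SE} = π_{EI} = 0, and H(S,E,I,R) = S + E + I + R, one has for all (S,E,I,R) ∈ ℝ⁴ that π·∇H equals the generalized SEIR vector field (−β·S·I + φ₁, β·S·I − ε·E + φ₂, −α·I + ε·E + φ₃, α·I − φ₁ − φ₂ − φ₃). -/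
section HamiltonianVectorField

variable {n : Type*} [Fintype n]

theorem hasFDerivAt_sum_coords (x : n → ℝ) :
    HasFDerivAt (fun y : n → ℝ => ∑ i, y i) (∑ i, ContinuousLinearMap.proj (R := ℝ) i) x :=
  HasFDerivAt.fun_sum fun i _ => hasFDerivAt_apply i x

variable [DecidableEq n]

theorem hamVF_eq_mulVec_of_hasFDerivAt {P : (n → ℝ) → Matrix n n ℝ} {H : (n → ℝ) → ℝ}
    {H' : (n → ℝ) →L[ℝ] ℝ} {x : n → ℝ} (hH : HasFDerivAt H H' x) :
    hamVF P H x = (P x).mulVec fun j => H' (Pi.single j 1) := by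
  rw [hamVF, hH.fderiv]

theorem hamVF_sum_coords (P : (n → ℝ) → Matrix n n ℝ) (x : n → ℝ) :
    hamVF P (fun y => ∑ i, y i) x = (P x).mulVec 1 := by
  rw [hamVF_eq_mulVec_of_hasFDerivAt (hasFDerivAt_sum_coords x)]
  congr 1
  funext j
  simp

end HamiltonianVectorField

/-- With the total population Hamiltonian `H(S,E,I,R) = S + E + I + R`, the Hamiltonian
vector field of the SEIR Poisson structure is the generalized SEIR vector field. -/
theorem generalizedSEIR_hamiltonian (α β ε : ℝ) (φ₁ φ₂ φ₃ : ℝ × ℝ × ℝ → ℝ) :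
    ∀ x : Fin 4 → ℝ,
      hamVF (seirPoisson α β ε φ₁ φ₂ φ₃) (fun y => y 0 + y 1 + y 2 + y 3) x =
        ![-β * x 0 * x 2 + φ₁ (x 0, x 1, x 2),
          β * x 0 * x 2 - ε * x 1 + φ₂ (x 0, x 1, x 2),
          -α * x 2 + ε * x 1 + φ₃ (x 0, x 1, x 2),
          α * x 2 - φ₁ (x 0, x 1, x 2) - φ₂ (x 0, x 1, x 2) - φ₃ (x 0, x 1, x 2)] := by
  intro x
  have hH : (fun y : Fin 4 → ℝ => y 0 + y 1 + y 2 + y 3) = fun y => ∑ i, y i :=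
    funext fun y => (Fin.sum_univ_four y).symm
  rw [hH, hamVF_sum_coords]
  funext i
  fin_cases i <;> simp [seirPoisson, Matrix.mulVec, dotProduct, Fin.sum_univ_four]
  ring
end

section
/- Let α, β, μ ∈ ℝ with β ≠ 0, and let S₀ ∈ ℝ with β·S₀ − μ > 0. Suppose (S,I,R) : [0,T) → ℝ³ is differentiable, solves the endemic SIRS system Ṡ = −β·S·I + μ·I, İ = β·S·I − (α+μ)·I, Ṙ = α·I, satisfies S(0) = S₀, I(0) = 1 − S₀, R(0) = 0, and β·S(t) − μ > 0 for all t ∈ [0,T). Then for all t ∈ [0,T): R(t) = −(α/β)·log((β·S(t) − μ)/(β·S₀ − μ)) and I(t) = 1 − S(t) + (α/β)·log((β·S(t) − μ)/(β·S₀ − μ)); consequently S satisfies the reduced scalar ODE Ṡ = (S − μ/β)·(−β + β·S − α·log((β·S − μ)/(β·S₀ − μ))). -/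
/-!
Along a solution both the total population `S + I + R` and the Casimir `C` have zero time
derivative: for `C` this is the identity `d/dt log (β S - μ) = β Ṡ / (β S - μ) = -β I`, valid where
`β S - μ ≠ 0`. The initial conditions put the solution on `S + I + R = 1` and `C = 0`; solving these
for `R` and `I` and substituting `I` into `Ṡ = -β (S - μ/β) I` gives the reduced equation.
-/

open Real Set

theorem eq_of_hasDerivAt_zero_on_Ico {E : Type*} [NormedAddCommGroup E] [NormedSpace ℝ E]
    {f : ℝ → E} {a b : ℝ} (hf : ∀ x ∈ Ico a b, HasDerivAt f 0 x) :
    ∀ t ∈ Ico a b, f t = f a := by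
  rintro t ⟨hat, htb⟩
  have hsub : Icc a t ⊆ Ico a b := fun x hx => ⟨hx.1, hx.2.trans_lt htb⟩
  exact constant_of_has_deriv_right_zero
    (fun x hx => (hf x (hsub hx)).continuousAt.continuousWithinAt)
    (fun x hx => (hf x (hsub (Ico_subset_Icc_self hx))).hasDerivWithinAt) t ⟨hat, le_rfl⟩

noncomputable def sirsCasimir (α β μ S₀ s r : ℝ) : ℝ :=
  -(r + α / β * log ((β * s - μ) / (β * S₀ - μ)))

theorem sirsCasimir_initial (α β μ S₀ : ℝ) (hS₀ : β * S₀ - μ ≠ 0) :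
    sirsCasimir α β μ S₀ S₀ 0 = 0 := by
  simp [sirsCasimir, div_self hS₀]

section SIRS

variable {α β μ S₀ t : ℝ} {S I R : ℝ → ℝ}

theorem hasDerivAt_sirs_population
    (hS : HasDerivAt S (-β * S t * I t + μ * I t) t)
    (hI : HasDerivAt I (β * S t * I t - (α + μ) * I t) t)
    (hR : HasDerivAt R (α * I t) t) :
    HasDerivAt (fun t => S t + I t + R t) 0 t :=
  ((hS.add hI).add hR).congr_deriv (by ring)

theorem hasDerivAt_sirs_log {c : ℝ} (hβS : β * S t - μ ≠ 0) (hc : c ≠ 0)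
    (hS : HasDerivAt S (-β * S t * I t + μ * I t) t) :
    HasDerivAt (fun t => log ((β * S t - μ) / c)) (-β * I t) t := by
  have hquot : HasDerivAt (fun t => (β * S t - μ) / c) (β * (-β * S t * I t + μ * I t) / c) t :=
    ((hS.const_mul β).sub_const μ).div_const c
  refine ((hasDerivAt_log (div_ne_zero hβS hc)).comp t hquot).congr_deriv ?_
  field_simp
  ring

theorem hasDerivAt_sirsCasimir (hβ : β ≠ 0) (hS₀ : β * S₀ - μ ≠ 0) (hβS : β * S t - μ ≠ 0)
    (hS : HasDerivAt S (-β * S t * I t + μ * I t) t) (hR : HasDerivAt R (α * I t) t) :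
    HasDerivAt (fun t => sirsCasimir α β μ S₀ (S t) (R t)) 0 t :=
  ((hR.add ((hasDerivAt_sirs_log hβS hS₀ hS).const_mul (α / β))).neg).congr_deriv
    (by field_simp; ring)

end SIRS

theorem endemicSIRS_casimir_reduction_general (α β μ T S₀ : ℝ) (hβ : β ≠ 0)
    (hS₀ : β * S₀ - μ > 0) (S I R : ℝ → ℝ)
    (hS : ∀ t ∈ Set.Ico (0 : ℝ) T, HasDerivAt S (-β * S t * I t + μ * I t) t)
    (hI : ∀ t ∈ Set.Ico (0 : ℝ) T, HasDerivAt I (β * S t * I t - (α + μ) * I t) t)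
    (hR : ∀ t ∈ Set.Ico (0 : ℝ) T, HasDerivAt R (α * I t) t)
    (hS0 : S 0 = S₀) (hI0 : I 0 = 1 - S₀) (hR0 : R 0 = 0)
    (hpos : ∀ t ∈ Set.Ico (0 : ℝ) T, β * S t - μ > 0) :
    ∀ t ∈ Set.Ico (0 : ℝ) T,
      R t = -(α / β) * Real.log ((β * S t - μ) / (β * S₀ - μ)) ∧
      I t = 1 - S t + α / β * Real.log ((β * S t - μ) / (β * S₀ - μ)) ∧
      HasDerivAt S
        ((S t - μ / β) *
          (-β + β * S t - α * Real.log ((β * S t - μ) / (β * S₀ - μ)))) t := by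
  intro t ht
  have hpop : S t + I t + R t = 1 := by
    rw [eq_of_hasDerivAt_zero_on_Ico (fun x hx => hasDerivAt_sirs_population
      (hS x hx) (hI x hx) (hR x hx)) t ht, hS0, hI0, hR0]
    ring
  have hcas : sirsCasimir α β μ S₀ (S t) (R t) = 0 := by
    rw [eq_of_hasDerivAt_zero_on_Ico (fun x hx => hasDerivAt_sirsCasimir hβ hS₀.ne'
      (hpos x hx).ne' (hS x hx) (hR x hx)) t ht, hS0, hR0, sirsCasimir_initial α β μ S₀ hS₀.ne']
  have hRt : R t = -(α / β) * log ((β * S t - μ) / (β * S₀ - μ)) := by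
    unfold sirsCasimir at hcas
    linarith
  have hIt : I t = 1 - S t + α / β * log ((β * S t - μ) / (β * S₀ - μ)) := by
    linarith
  refine ⟨hRt, hIt, (hS t ht).congr_deriv ?_⟩
  rw [hIt]
  field_simp
  ring

/-- For a solution of the endemic SIRS system `Ṡ = −β·S·I + μ·I`, `İ = β·S·I − (α+μ)·I`,
`Ṙ = α·I` on `[0,T)` with initial conditions `S(0) = S₀`, `I(0) = 1 − S₀`, `R(0) = 0`
(so that the Casimir level is `C = 0` and the population is `1`), and with
`β·S(t) − μ > 0` throughout, the Casimir and the conservation of the total population give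
`R = −(α/β)·log((β·S − μ)/(β·S₀ − μ))` and `I = 1 − S + (α/β)·log((β·S − μ)/(β·S₀ − μ))`,
whence `S` satisfies the reduced scalar ODE
`Ṡ = (S − μ/β)·(−β + β·S − α·log((β·S − μ)/(β·S₀ − μ)))`. -/
theorem endemicSIRS_casimir_reduction (α β μ T S₀ : ℝ) (hβ : β ≠ 0) (hT : 0 < T)
    (hS₀ : β * S₀ - μ > 0) (S I R : ℝ → ℝ)
    (hS : ∀ t ∈ Set.Ico (0 : ℝ) T, HasDerivAt S (-β * S t * I t + μ * I t) t)
    (hI : ∀ t ∈ Set.Ico (0 : ℝ) T, HasDerivAt I (β * S t * I t - (α + μ) * I t) t)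
    (hR : ∀ t ∈ Set.Ico (0 : ℝ) T, HasDerivAt R (α * I t) t)
    (hS0 : S 0 = S₀) (hI0 : I 0 = 1 - S₀) (hR0 : R 0 = 0)
    (hpos : ∀ t ∈ Set.Ico (0 : ℝ) T, β * S t - μ > 0) :
    ∀ t ∈ Set.Ico (0 : ℝ) T,
      R t = -(α / β) * Real.log ((β * S t - μ) / (β * S₀ - μ)) ∧
      I t = 1 - S t + α / β * Real.log ((β * S t - μ) / (β * S₀ - μ)) ∧
      HasDerivAt S
        ((S t - μ / β) *
          (-β + β * S t - α * Real.log ((β * S t - μ) / (β * S₀ - μ)))) t :=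
  endemicSIRS_casimir_reduction_general α β μ T S₀ hβ hS₀ S I R hS hI hR hS0 hI0 hR0 hpos
end
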